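/- If κ is γ-reflecting and C¹, C² are γ-club in κ, then C¹ ∩ C² is γ-club in κ. Hence the γ-clubs on a γ-reflecting κ generate a filter. -/

import Mathlib

open Set

namespace GenStat

/-- `S` is unbounded in (below) `κ`. -/
def Unbdd (S : Set Ordinal) (κ : Ordinal) : Prop :=
  ∀ β < κ, ∃ α ∈ S, β ≤ α ∧ α < κ

/-- `Stat γ S κ` : `S` is `γ`-stationary in `κ`.  Defined by recursion on `γ`:
`S` is `0`-stationary iff unbounded; `S` is `γ`-stationary iff for every `η < γ`,
`κ` is `η`-reflecting and `S` meets every `η`-club of `κ`. -/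
def Stat (γ : Ordinal) (S : Set Ordinal) (κ : Ordinal) : Prop :=
  (γ = 0 → Unbdd S κ) ∧
  ∀ η < γ,
    (∀ A B : Set Ordinal, A ⊆ Set.Iio κ → B ⊆ Set.Iio κ →
        Stat η A κ → Stat η B κ →
        ∃ α < κ, Stat η (A ∩ Set.Iio α) α ∧ Stat η (B ∩ Set.Iio α) α)
    ∧ (∀ C : Set Ordinal, C ⊆ Set.Iio κ → Stat η C κ →
        (∀ α < κ, Stat η (C ∩ Set.Iio α) α → α ∈ C) →
        (S ∩ C).Nonempty)
termination_by γ

/-- `κ` is `γ`-reflecting: any two `γ`-stationary subsets of `κ` are simultaneously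
`γ`-stationary below some `α < κ`. -/
def Reflecting (γ κ : Ordinal) : Prop :=
  ∀ A B : Set Ordinal, A ⊆ Set.Iio κ → B ⊆ Set.Iio κ →
    Stat γ A κ → Stat γ B κ →
    ∃ α < κ, Stat γ (A ∩ Set.Iio α) α ∧ Stat γ (B ∩ Set.Iio α) α

/-- `C` is `γ`-club in `κ`: `γ`-stationary in `κ` and `γ`-stationary-closed below `κ`. -/
def IsClub (γ : Ordinal) (C : Set Ordinal) (κ : Ordinal) : Prop :=
  C ⊆ Set.Iio κ ∧ Stat γ C κ ∧ ∀ α < κ, Stat γ (C ∩ Set.Iio α) α → α ∈ C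

/-- `d_γ(A)` relative to `κ` : the set of `α < κ` below which `A` is `γ`-stationary. -/
def dSet (γ : Ordinal) (A : Set Ordinal) (κ : Ordinal) : Set Ordinal :=
  {α | α < κ ∧ Stat γ (A ∩ Set.Iio α) α}

/-! Induct on the level: more generally, an `η`-club and a `ζ`-club meet in a `max η ζ`-club
whenever `κ` is `max η ζ`-reflecting. Closure is automatic, since a `γ`-stationary set is
`η`-stationary for `0 < η ≤ γ` and the only `0`-club is `Iio κ`. For stationarity, let `G` be a
`ξ`-club with `ξ < max η ζ`. If `η < ζ`, then `E ∩ G` is a club of level below `ζ` by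
induction, so `F` meets it. If `η = ζ`, then by induction `E ∩ G` and `F ∩ G` are still
`ζ`-stationary; reflecting both to a common `α < κ` puts `α` into `E`, `F` and `G` by closure. -/

variable {κ : Ordinal} {γ η ζ : Ordinal} {S C E F : Set Ordinal}

theorem stat_zero_iff : Stat 0 S κ ↔ Unbdd S κ := by
  rw [Stat]
  simp

theorem stat_iff_of_ne_zero (hγ : γ ≠ 0) :
    Stat γ S κ ↔ ∀ η < γ, Reflecting η κ ∧ ∀ C, IsClub η C κ → (S ∩ C).Nonempty := by
  rw [Stat]
  simp only [hγ, false_implies, true_and, IsClub, and_imp]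
  rfl

theorem Stat.reflecting (hS : Stat γ S κ) (hη : η < γ) : Reflecting η κ :=
  ((stat_iff_of_ne_zero hη.ne_bot).1 hS η hη).1

theorem Stat.inter_nonempty (hS : Stat γ S κ) (hη : η < γ) (hC : IsClub η C κ) :
    (S ∩ C).Nonempty :=
  ((stat_iff_of_ne_zero hη.ne_bot).1 hS η hη).2 C hC

theorem Stat.of_le (hS : Stat γ S κ) (hη : η ≠ 0) (hle : η ≤ γ) : Stat η S κ :=
  (stat_iff_of_ne_zero hη).2 fun ζ hζ =>
    (stat_iff_of_ne_zero (hη.bot_lt.trans_le hle).ne').1 hS ζ (hζ.trans_le hle)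

theorem Stat.mono {T : Set Ordinal} (hS : Stat γ S κ) (hST : S ⊆ T) : Stat γ T κ := by
  rcases eq_or_ne γ 0 with rfl | hγ
  · rw [stat_zero_iff] at hS ⊢
    intro β hβ
    obtain ⟨α, hαS, hβα, hακ⟩ := hS β hβ
    exact ⟨α, hST hαS, hβα, hακ⟩
  · rw [stat_iff_of_ne_zero hγ] at hS ⊢
    exact fun η hη =>
      ⟨(hS η hη).1, fun C hC => ((hS η hη).2 C hC).mono (inter_subset_inter_left _ hST)⟩

theorem isClub_zero_iff : IsClub 0 C κ ↔ C = Iio κ := by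
  refine ⟨fun hC => hC.1.antisymm fun β => ?_, ?_⟩
  · induction β using WellFoundedLT.induction with
    | ind β IH =>
      intro hβ
      refine hC.2.2 β hβ (stat_zero_iff.2 fun b hb => ?_)
      exact ⟨b, ⟨IH b hb (hb.trans hβ), hb⟩, le_rfl, hb⟩
  · rintro rfl
    exact ⟨subset_rfl, stat_zero_iff.2 fun β hβ => ⟨β, hβ, le_rfl, hβ⟩, fun α hα _ => hα⟩

theorem dSet_mono {A B : Set Ordinal} (h : A ⊆ B) : dSet γ A κ ⊆ dSet γ B κ :=
  fun _ ⟨hα, hs⟩ => ⟨hα, hs.mono (inter_subset_inter_left _ h)⟩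

theorem IsClub.dSet_subset_of_le (hC : IsClub η C κ) (hle : η ≤ γ) : dSet γ C κ ⊆ C := by
  rcases eq_or_ne η 0 with rfl | hη
  · rw [isClub_zero_iff.1 hC]
    exact fun _ hα => hα.1
  · exact fun α ⟨hα, hs⟩ => hC.2.2 α hα (hs.of_le hη hle)

theorem IsClub.inter_of_stat (hE : IsClub η E κ) (hF : IsClub ζ F κ)
    (h : Stat (max η ζ) (E ∩ F) κ) : IsClub (max η ζ) (E ∩ F) κ :=
  ⟨inter_subset_left.trans hE.1, h, fun _ hα hs =>
    ⟨hE.dSet_subset_of_le (le_max_left _ _) (dSet_mono inter_subset_left ⟨hα, hs⟩),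
      hF.dSet_subset_of_le (le_max_right _ _) (dSet_mono inter_subset_right ⟨hα, hs⟩)⟩⟩

theorem Stat.inter_of_forall_isClub_inter (hS : Stat γ S κ) (hη : η < γ)
    (hE : ∀ ζ < γ, ∀ F, IsClub ζ F κ → IsClub (max η ζ) (E ∩ F) κ) : Stat γ (S ∩ E) κ := by
  refine (stat_iff_of_ne_zero hη.ne_bot).2 fun ζ hζ => ⟨hS.reflecting hζ, fun F hF => ?_⟩
  obtain ⟨x, hxS, hxE, hxF⟩ := hS.inter_nonempty (max_lt hη hζ) (hE ζ hζ F hF)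
  exact ⟨x, ⟨hxS, hxE⟩, hxF⟩

theorem Reflecting.stat_inter (hrefl : Reflecting γ κ) (hE : IsClub γ E κ) (hF : IsClub γ F κ)
    (IH : ∀ η < γ, ∀ ζ < γ, ∀ G H,
      IsClub η G κ → IsClub ζ H κ → IsClub (max η ζ) (G ∩ H) κ) :
    Stat γ (E ∩ F) κ := by
  rcases eq_or_ne γ 0 with rfl | hγ
  · rw [isClub_zero_iff] at hE hF
    rw [hE, hF, inter_self]
    exact (isClub_zero_iff.2 rfl).2.1
  refine (stat_iff_of_ne_zero hγ).2 fun η hη => ⟨hE.2.1.reflecting hη, fun G hG => ?_⟩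
  have hEG := hE.2.1.inter_of_forall_isClub_inter hη fun ζ hζ H hH => IH η hη ζ hζ G H hG hH
  have hFG := hF.2.1.inter_of_forall_isClub_inter hη fun ζ hζ H hH => IH η hη ζ hζ G H hG hH
  obtain ⟨α, hα, hαE, hαF⟩ :=
    hrefl _ _ (inter_subset_left.trans hE.1) (inter_subset_left.trans hF.1) hEG hFG
  exact ⟨α, ⟨hE.dSet_subset_of_le le_rfl (dSet_mono inter_subset_left ⟨hα, hαE⟩),
    hF.dSet_subset_of_le le_rfl (dSet_mono inter_subset_left ⟨hα, hαF⟩)⟩,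
    hG.dSet_subset_of_le hη.le (dSet_mono inter_subset_right ⟨hα, hαE⟩)⟩

theorem isClub_inter {η ζ : Ordinal} {E F : Set Ordinal} (hrefl : Reflecting (max η ζ) κ)
    (hE : IsClub η E κ) (hF : IsClub ζ F κ) : IsClub (max η ζ) (E ∩ F) κ := by
  have IH : ∀ ξ < max η ζ, ∀ ξ' < max η ζ, ∀ G H,
      IsClub ξ G κ → IsClub ξ' H κ → IsClub (max ξ ξ') (G ∩ H) κ := by
    intro ξ hξ ξ' hξ' G H hG hH
    have hlt : max ξ ξ' < max η ζ := max_lt hξ hξ'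
    exact isClub_inter ((lt_max_iff.1 hlt).elim hE.2.1.reflecting hF.2.1.reflecting) hG hH
  refine hE.inter_of_stat hF ?_
  rcases lt_trichotomy η ζ with h | rfl | h
  · rw [max_eq_right h.le] at IH ⊢
    rw [inter_comm]
    exact hF.2.1.inter_of_forall_isClub_inter h fun ξ hξ G hG => IH η h ξ hξ E G hE hG
  · rw [max_self] at hrefl IH ⊢
    exact hrefl.stat_inter hE hF IH
  · rw [max_eq_left h.le] at IH ⊢
    exact hE.2.1.inter_of_forall_isClub_inter h fun ξ hξ G hG => IH ζ h ξ hξ F G hF hG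
termination_by max η ζ
decreasing_by exact hlt

/-- If `κ` is `γ`-reflecting and `C¹`, `C²` are `γ`-club in `κ`, then
`C¹ ∩ C²` is `γ`-club in `κ`; hence the `γ`-clubs generate a filter on `κ`. -/
theorem club_inter_club (κ γ : Ordinal) (C₁ C₂ : Set Ordinal)
    (hrefl : Reflecting γ κ) (h₁ : IsClub γ C₁ κ) (h₂ : IsClub γ C₂ κ) :
    IsClub γ (C₁ ∩ C₂) κ :=
  max_self γ ▸ isClub_inter ((max_self γ).symm ▸ hrefl) h₁ h₂

end GenStat
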